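/- With the above notation, for any s ∈ [0,1] and any z ∈ ℂ∖ℝ, one has ∫_{λ∈ℝ} C^n_{s,λ}/(z−λ)² dλ = −X^n(s,z). -/

import Mathlib

/-!
Writing `C^n_{s,λ} = ∑_j w_j 1_{λ_j ≤ λ}`, the integral is a sum of the elementary integrals
`∫_{λ_j}^∞ (z - λ)⁻² dλ = -(z - λ_j)⁻¹`. On the other side, the spectral decomposition gives
`(z - A)⁻¹ = U diag((z - λ_j)⁻¹) Uᵀ`, so `Tr(P_s (z - A)⁻¹) = ∑_{i ≤ ns} ∑_j u_{ij}² / (z - λ_j)`,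
and `⌊ns⌋` is the number of indices `i ≤ ns`.
-/

open Matrix
open MeasureTheory Set Filter Finset Topology

namespace Complex

variable {z : ℂ}

theorem sub_ofReal_ne_zero_of_im_ne_zero (hz : z.im ≠ 0) (t : ℝ) : z - t ≠ 0 := fun h =>
  hz (by simpa using congrArg im h)

theorem norm_inv_sub_ofReal_sq (z : ℂ) (t : ℝ) :
    ‖((z - t) ^ 2)⁻¹‖ = ((t - z.re) ^ 2 + z.im ^ 2)⁻¹ := by
  rw [norm_inv, norm_pow, Complex.sq_norm, normSq_apply]
  simp only [sub_re, sub_im, ofReal_re, ofReal_im, sub_zero]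
  ring

theorem integrable_inv_sub_ofReal_sq (hz : z.im ≠ 0) :
    Integrable fun t : ℝ => ((z - t) ^ 2)⁻¹ := by
  have hdom : Integrable fun t : ℝ => ((t - z.re) ^ 2 + z.im ^ 2)⁻¹ := by
    refine (((integrable_inv_one_add_sq.comp_mul_left' (inv_ne_zero hz)).comp_sub_right
      z.re).const_mul (z.im ^ 2)⁻¹).congr (ae_of_all _ fun t => ?_)
    field_simp
    ring
  have hcont : Continuous fun t : ℝ => ((z - t) ^ 2)⁻¹ :=
    ((continuous_const.sub continuous_ofReal).pow 2).inv₀ fun t =>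
      pow_ne_zero 2 (sub_ofReal_ne_zero_of_im_ne_zero hz t)
  exact hdom.mono' hcont.aestronglyMeasurable
    (ae_of_all _ fun t => (norm_inv_sub_ofReal_sq z t).le)

theorem hasDerivAt_inv_sub_ofReal (hz : z.im ≠ 0) (t : ℝ) :
    HasDerivAt (fun t : ℝ => (z - t)⁻¹) ((z - t) ^ 2)⁻¹ t := by
  have h := ((hasDerivAt_id (t : ℂ)).const_sub z).inv (sub_ofReal_ne_zero_of_im_ne_zero hz t)
  simpa using h.comp_ofReal

theorem tendsto_inv_sub_ofReal_atTop :
    Tendsto (fun t : ℝ => (z - t)⁻¹) atTop (𝓝 0) :=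
  tendsto_inv₀_cobounded.comp <|
    (tendsto_const_sub_cobounded z).comp (RCLike.tendsto_ofReal_atTop_cobounded ℂ)

theorem integral_Ioi_inv_sub_ofReal_sq (hz : z.im ≠ 0) (a : ℝ) :
    ∫ t in Ioi a, ((z - t) ^ 2)⁻¹ = -(z - a)⁻¹ := by
  rw [integral_Ioi_of_hasDerivAt_of_tendsto' (fun t _ => hasDerivAt_inv_sub_ofReal hz t)
    (integrable_inv_sub_ofReal_sq hz).integrableOn tendsto_inv_sub_ofReal_atTop, zero_sub]

theorem integral_sum_filter_le_div_sq {ι : Type*} [Fintype ι] (hz : z.im ≠ 0) (a : ι → ℝ)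
    (w : ι → ℂ) :
    ∫ t : ℝ, (∑ j with a j ≤ t, w j) / (z - t) ^ 2 = -∑ j, w j / (z - a j) := by
  have hsplit : ∀ t : ℝ, (∑ j with a j ≤ t, w j) / (z - t) ^ 2 =
      ∑ j, w j * (Ici (a j)).indicator (fun t : ℝ => ((z - t) ^ 2)⁻¹) t := by
    intro t
    rw [sum_filter, div_eq_mul_inv, sum_mul]
    refine sum_congr rfl fun j _ => ?_
    by_cases h : a j ≤ t <;> simp [h]
  have hint : ∀ j, Integrable ((Ici (a j)).indicator (fun t : ℝ => ((z - t) ^ 2)⁻¹)) := fun j =>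
    (integrable_inv_sub_ofReal_sq hz).indicator measurableSet_Ici
  simp_rw [hsplit]
  rw [integral_finsetSum _ fun j _ => (hint j).const_mul _, ← sum_neg_distrib]
  refine sum_congr rfl fun j _ => ?_
  rw [integral_const_mul, integral_indicator measurableSet_Ici, integral_Ici_eq_integral_Ioi,
    integral_Ioi_inv_sub_ofReal_sq hz, div_eq_mul_inv, mul_neg]

end Complex

namespace Matrix

variable {n K : Type*} [Fintype n] [DecidableEq n]

theorem smul_one_sub_mul_diagonal_mul [CommRing K] {U V : Matrix n n K} (hUV : U * V = 1)
    (z : K) (d : n → K) :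
    z • (1 : Matrix n n K) - U * diagonal d * V = U * diagonal (fun j => z - d j) * V := by
  rw [← diagonal_sub, Matrix.mul_sub, Matrix.sub_mul, ← smul_one_eq_diagonal, Matrix.mul_smul,
    Matrix.smul_mul, Matrix.mul_one, hUV]

theorem inv_mul_diagonal_mul [Field K] {U V : Matrix n n K} (hUV : U * V = 1) (hVU : V * U = 1)
    {d : n → K} (hd : ∀ j, d j ≠ 0) :
    (U * diagonal d * V)⁻¹ = U * diagonal (fun j => (d j)⁻¹) * V := by
  refine inv_eq_right_inv ?_
  calc U * diagonal d * V * (U * diagonal (fun j => (d j)⁻¹) * V)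
      = U * (diagonal d * (V * U) * diagonal (fun j => (d j)⁻¹)) * V := by
        simp only [Matrix.mul_assoc]
    _ = 1 := by
        rw [hVU, Matrix.mul_one, diagonal_mul_diagonal]
        simp [hd, hUV]

theorem trace_mul_diagonal_mul [CommSemiring K] {U V : Matrix n n K} (hVU : V * U = 1)
    (d : n → K) :
    trace (U * diagonal d * V) = ∑ j, d j := by
  rw [trace_mul_comm, ← Matrix.mul_assoc, hVU, Matrix.one_mul, trace_diagonal]

theorem trace_diagonal_ite_mul [Semiring K] (p : n → Prop) [DecidablePred p] (M : Matrix n n K) :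
    trace (diagonal (fun i => if p i then 1 else 0) * M) = ∑ i with p i, M i i := by
  simp [trace, diagonal_mul, sum_filter]

theorem mul_diagonal_mul_transpose_apply_self [CommSemiring K] (U : Matrix n n K) (d : n → K)
    (i : n) :
    (U * diagonal d * Uᵀ) i i = ∑ j, U i j ^ 2 * d j := by
  rw [mul_apply]
  simp only [mul_diagonal, transpose_apply]
  exact sum_congr rfl fun j _ => by ring

end Matrix

theorem card_filter_succ_le_mul {n : ℕ} {s : ℝ} (hs : s ∈ Icc (0 : ℝ) 1) :
    (#{i : Fin n | ((i : ℕ) + 1 : ℝ) ≤ n * s} : ℤ) = ⌊(n : ℝ) * s⌋ := by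
  have hns : 0 ≤ (n : ℝ) * s := mul_nonneg n.cast_nonneg hs.1
  have hfloor : ⌊(n : ℝ) * s⌋₊ ≤ n :=
    Nat.floor_le_of_le (mul_le_of_le_one_right n.cast_nonneg hs.2)
  have hfilter : univ.filter (fun i : Fin n => ((i : ℕ) + 1 : ℝ) ≤ n * s) =
      univ.filter (fun i : Fin n => (i : ℕ) < ⌊(n : ℝ) * s⌋₊) := by
    refine filter_congr fun i _ => ?_
    rw [Nat.lt_iff_add_one_le, Nat.le_floor_iff hns]
    push_cast
    rfl
  rw [hfilter, Fin.card_filter_val_lt, min_eq_right hfloor, Int.natCast_floor_eq_floor hns]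

open scoped Classical in
theorem integral_C_eq_neg_X_general
    (n : ℕ)
    (A U : Matrix (Fin n) (Fin n) ℝ) (lam : Fin n → ℝ)
    (hU1 : U * Uᵀ = 1) (hU2 : Uᵀ * U = 1)
    (hA : A = U * Matrix.diagonal lam * Uᵀ)
    (s : ℝ) (hs : s ∈ Set.Icc (0 : ℝ) 1)
    (z : ℂ) (hz : z.im ≠ 0) :
    (∫ t : ℝ,
        (((Real.sqrt n)⁻¹ *
            ∑ i ∈ Finset.univ.filter (fun i : Fin n => ((i : ℕ) + 1 : ℝ) ≤ n * s),
              ∑ j ∈ Finset.univ.filter (fun j : Fin n => lam j ≤ t),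
                (U i j ^ 2 - 1 / n) : ℝ) : ℂ) / (z - (t : ℂ)) ^ 2)
      = - ((Real.sqrt n : ℂ)⁻¹ *
          (Matrix.trace
              (Matrix.diagonal
                  (fun i : Fin n => if ((i : ℕ) + 1 : ℝ) ≤ n * s then (1 : ℂ) else 0) *
                (z • (1 : Matrix (Fin n) (Fin n) ℂ) - A.map (fun x : ℝ => (x : ℂ)))⁻¹)
            - ((((⌊(n : ℝ) * s⌋ : ℤ) : ℝ) / n : ℝ) : ℂ) *
              Matrix.trace
                (z • (1 : Matrix (Fin n) (Fin n) ℂ) - A.map (fun x : ℝ => (x : ℂ)))⁻¹)) := by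
  set S : Finset (Fin n) := {i | ((i : ℕ) + 1 : ℝ) ≤ n * s}
  set Uc := U.map Complex.ofRealHom
  have hUc1 : Uc * Ucᵀ = 1 := by
    rw [← transpose_map, ← Matrix.map_mul, hU1, Matrix.map_one _ (map_zero _) (map_one _)]
  have hUc2 : Ucᵀ * Uc = 1 := by
    rw [← transpose_map, ← Matrix.map_mul, hU2, Matrix.map_one _ (map_zero _) (map_one _)]
  have hAc : A.map (fun x : ℝ => (x : ℂ)) = Uc * diagonal (fun j => (lam j : ℂ)) * Ucᵀ := by
    rw [hA]
    change (U * diagonal lam * Uᵀ).map Complex.ofRealHom = _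
    rw [← transpose_map, Matrix.map_mul, Matrix.map_mul, diagonal_map (map_zero _)]
    rfl
  have hR : (z • (1 : Matrix (Fin n) (Fin n) ℂ) - A.map (fun x : ℝ => (x : ℂ)))⁻¹ =
      Uc * diagonal (fun j => (z - lam j)⁻¹) * Ucᵀ := by
    rw [hAc, smul_one_sub_mul_diagonal_mul hUc1,
      inv_mul_diagonal_mul hUc1 hUc2 fun j => Complex.sub_ofReal_ne_zero_of_im_ne_zero hz (lam j)]
  have hintegrand : ∀ t : ℝ,
      (((Real.sqrt n)⁻¹ * ∑ i ∈ S, ∑ j with lam j ≤ t, (U i j ^ 2 - 1 / n) : ℝ) : ℂ) /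
        (z - t) ^ 2 =
      (∑ j with lam j ≤ t, (Real.sqrt n : ℂ)⁻¹ * ∑ i ∈ S, ((U i j : ℂ) ^ 2 - 1 / n)) /
        (z - t) ^ 2 := by
    intro t
    push_cast
    rw [sum_comm, mul_sum]
  simp_rw [hintegrand]
  rw [Complex.integral_sum_filter_le_div_sq hz, hR, trace_diagonal_ite_mul,
    trace_mul_diagonal_mul hUc2, ← card_filter_succ_le_mul hs]
  simp only [mul_diagonal_mul_transpose_apply_self, Uc, map_apply, Complex.ofRealHom_eq_coe,
    sum_sub_distrib, sum_const, nsmul_eq_mul, mul_sum, div_eq_mul_inv]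
  push_cast
  rw [sum_comm, neg_inj, ← sum_sub_distrib, mul_sum]
  refine sum_congr rfl fun j _ => ?_
  rw [← sum_mul]
  ring

open scoped Classical in
/-- With `U` the orthogonal matrix of eigenvectors of a real symmetric matrix `A` with
eigenvalues `λ₁ ≤ ⋯ ≤ λₙ`, for `s ∈ [0,1]` and non-real `z`,
`∫_ℝ C^n_{s,λ}/(z−λ)² dλ = −X^n(s,z)`, where
`C^n_{s,λ} = (1/√n) ∑_{i ≤ ns, j : λ_j ≤ λ} (u_{ij}² − 1/n)` and
`X^n(s,z) = (1/√n)(Tr(P_s (z−A)⁻¹) − (⌊ns⌋/n) Tr((z−A)⁻¹))`. -/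
theorem integral_C_eq_neg_X
    (n : ℕ) (hn : 0 < n)
    (A U : Matrix (Fin n) (Fin n) ℝ) (lam : Fin n → ℝ)
    (hmono : Monotone lam)
    (hAsymm : A.IsSymm)
    (hU1 : U * Uᵀ = 1) (hU2 : Uᵀ * U = 1)
    (hA : A = U * Matrix.diagonal lam * Uᵀ)
    (s : ℝ) (hs : s ∈ Set.Icc (0 : ℝ) 1)
    (z : ℂ) (hz : z.im ≠ 0) :
    (∫ t : ℝ,
        (((Real.sqrt n)⁻¹ *
            ∑ i ∈ Finset.univ.filter (fun i : Fin n => ((i : ℕ) + 1 : ℝ) ≤ n * s),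
              ∑ j ∈ Finset.univ.filter (fun j : Fin n => lam j ≤ t),
                (U i j ^ 2 - 1 / n) : ℝ) : ℂ) / (z - (t : ℂ)) ^ 2)
      = - ((Real.sqrt n : ℂ)⁻¹ *
          (Matrix.trace
              (Matrix.diagonal
                  (fun i : Fin n => if ((i : ℕ) + 1 : ℝ) ≤ n * s then (1 : ℂ) else 0) *
                (z • (1 : Matrix (Fin n) (Fin n) ℂ) - A.map (fun x : ℝ => (x : ℂ)))⁻¹)
            - ((((⌊(n : ℝ) * s⌋ : ℤ) : ℝ) / n : ℝ) : ℂ) *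
              Matrix.trace
                (z • (1 : Matrix (Fin n) (Fin n) ℂ) - A.map (fun x : ℝ => (x : ℂ)))⁻¹)) :=
  integral_C_eq_neg_X_general n A U lam hU1 hU2 hA s hs z hz
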